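/- Let p ≥ 3 be an odd integer, set e_p := exp(2πi/p) and e_p^w := exp(2πi w/p) for w ∈ ℂ. Then for every λ ∈ ℂ and every natural number m with 0 ≤ m ≤ (p−3)/2: Σ_{n=0}^{p−1} ( e_p^{λ+2n+1} + e_p^{−(λ+2n+1)} − 2 ) · σ_m( e_p^{λ+2n+1}, e_p ) = −2p · (−1)^m · [2m+1 choose m]_{e_p} · e_p^{−m(m+1)/2}; in particular the left-hand side is independent of λ. -/

import Mathlib

/-- `e_p := exp(2πi/p)`. -/
noncomputable def ep (p : ℕ) : ℂ :=
  Complex.exp (2 * Real.pi * Complex.I / p)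

/-- `e_p^w := exp(2πi w / p)`. -/
noncomputable def epow (p : ℕ) (w : ℂ) : ℂ :=
  Complex.exp (2 * Real.pi * Complex.I * w / p)

/-- `σ_m(x,ζ) = ∏_{i=1}^{m} (x + x⁻¹ − ζ^i − ζ^{−i})`. -/
noncomputable def sigma' (m : ℕ) (x ζ : ℂ) : ℂ :=
  ∏ i ∈ Finset.Icc 1 m, (x + x⁻¹ - ζ ^ i - (ζ ^ i)⁻¹)

/-- Evaluation at `ζ : ℂ` of the Gaussian binomial coefficient `[n choose k]_q ∈ ℤ[q]`,
defined by the `q`-Pascal recursion, agreeing with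
`∏_{i=1}^{k} (1−q^{n−k+i})/(1−q^i)` for `k ≤ n` and with `0` for `k > n`. -/
def qbinom : ℕ → ℕ → ℂ → ℂ
  | _, 0, _ => 1
  | 0, _ + 1, _ => 0
  | n + 1, k + 1, ζ => qbinom n k ζ + ζ ^ (k + 1) * qbinom n (k + 1) ζ

/-!
Write `ζ = e_p` and `x = e_p^{λ+2n+1}`. Since `x + x⁻¹ - ζⁱ - ζ⁻ⁱ = x⁻¹ (1 - ζ⁻ⁱ x) (1 - ζⁱ x)`, the
summand is `-x^{-(m+1)} (x - 1) ∏_{j=-m}^{m} (1 - ζʲ x)`, a Laurent polynomial in `x` whose exponents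
lie in `[-(m+1), m+1]`. As `n` runs over `0, …, p-1`, the points `x` run over a coset of the `p`-th
roots of unity (`ζ²` is primitive because `p` is odd), and `m + 1 < p`, so the sum is `p` times the
constant term, whatever `λ` is. Cauchy's `q`-binomial theorem gives the coefficients of
`∏_{j=-m}^{m} (1 - ζʲ x)`, and the symmetry `[2m+1, m]_ζ = [2m+1, m+1]_ζ` makes the two
contributions to the constant term equal.
-/

open Finset Polynomial

section qbinom

variable (ζ : ℂ)

@[simp]
lemma qbinom_zero_right (n : ℕ) : qbinom n 0 ζ = 1 := by
  cases n <;> rfl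

lemma qbinom_succ_succ (n k : ℕ) :
    qbinom (n + 1) (k + 1) ζ = qbinom n k ζ + ζ ^ (k + 1) * qbinom n (k + 1) ζ := rfl

lemma qbinom_eq_zero_of_lt {n k : ℕ} (h : n < k) : qbinom n k ζ = 0 := by
  induction n generalizing k with
  | zero => obtain ⟨k, rfl⟩ := Nat.exists_eq_add_one_of_ne_zero (by omega : k ≠ 0); rfl
  | succ n ih =>
    obtain ⟨k, rfl⟩ := Nat.exists_eq_add_one_of_ne_zero (by omega : k ≠ 0)
    rw [qbinom_succ_succ, ih (by omega), ih (by omega), mul_zero, add_zero]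

@[simp]
lemma qbinom_self (n : ℕ) : qbinom n n ζ = 1 := by
  induction n with
  | zero => rfl
  | succ n ih =>
    rw [qbinom_succ_succ, ih, qbinom_eq_zero_of_lt ζ n.lt_succ_self, mul_zero, add_zero]

lemma qbinom_succ_succ' {n k : ℕ} (h : k ≤ n) :
    qbinom (n + 1) (k + 1) ζ = ζ ^ (n - k) * qbinom n k ζ + qbinom n (k + 1) ζ := by
  induction n generalizing k with
  | zero =>
    obtain rfl : k = 0 := by omega
    simp [qbinom_eq_zero_of_lt ζ zero_lt_one]
  | succ n ih =>
    rcases k with _ | k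
    · conv_lhs => rw [qbinom_succ_succ, ih (Nat.zero_le n)]
      rw [qbinom_succ_succ ζ n 0]
      simp only [qbinom_zero_right, Nat.sub_zero, pow_succ]
      ring
    rcases h.eq_or_lt with h | h
    · obtain rfl : k = n := by omega
      simp [qbinom_eq_zero_of_lt ζ (Nat.lt_succ_self _)]
    conv_lhs => rw [qbinom_succ_succ, ih (by omega : k ≤ n), ih (by omega : k + 1 ≤ n)]
    rw [qbinom_succ_succ ζ n k, qbinom_succ_succ ζ n (k + 1),
      show n - k = n - (k + 1) + 1 by omega, show n + 1 - (k + 1) = n - (k + 1) + 1 by omega]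
    ring

lemma qbinom_symm {n k : ℕ} (h : k ≤ n) : qbinom n (n - k) ζ = qbinom n k ζ := by
  induction n generalizing k with
  | zero =>
    obtain rfl : k = 0 := by omega
    rfl
  | succ n ih =>
    rcases k with _ | k
    · simp
    rcases h.eq_or_lt with h | h
    · rw [h, Nat.sub_self, qbinom_zero_right, qbinom_self]
    rw [show n + 1 - (k + 1) = n - (k + 1) + 1 by omega, qbinom_succ_succ,
      show n - (k + 1) + 1 = n - k by omega, ih (by omega), ih (by omega),
      qbinom_succ_succ' ζ (by omega : k ≤ n)]
    ring

end qbinom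

/-- Cauchy's `q`-binomial theorem, with the variable scaled by `c`. -/
theorem coeff_prod_one_add_C_mul_X (ζ : ℂ) (N : ℕ) (c : ℂ) (k : ℕ) :
    (∏ j ∈ range N, (1 + C (c * ζ ^ j) * X)).coeff k = c ^ k * ζ ^ k.choose 2 * qbinom N k ζ := by
  induction N generalizing c k with
  | zero => rcases k with _ | k <;> simp [coeff_one, qbinom]
  | succ N ih =>
    have hshift : ∏ j ∈ range N, (1 + C (c * ζ ^ (j + 1)) * X)
        = ∏ j ∈ range N, (1 + C (c * ζ * ζ ^ j) * X) := by
      simp only [pow_succ', mul_assoc]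
    rw [prod_range_succ', hshift, pow_zero, mul_one, mul_comm, add_mul, one_mul, mul_assoc,
      coeff_add, coeff_C_mul]
    rcases k with _ | k
    · rw [coeff_X_mul_zero, ih]
      simp
    · rw [coeff_X_mul, ih, ih, qbinom_succ_succ, Nat.choose_succ_succ', Nat.choose_one_right]
      ring

lemma natDegree_prod_one_add_C_mul_X_le (ζ : ℂ) (N : ℕ) (c : ℂ) :
    (∏ j ∈ range N, (1 + C (c * ζ ^ j) * X)).natDegree ≤ N :=
  natDegree_le_iff_coeff_eq_zero.mpr fun k hk => by
    rw [coeff_prod_one_add_C_mul_X, qbinom_eq_zero_of_lt ζ hk, mul_zero]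

/-- Each factor of `σ_m(x, ζ)` is `x⁻¹ (1 - ζ⁻ⁱ x) (1 - ζⁱ x)`, and `x + x⁻¹ - 2 = -x⁻¹ (x - 1) (1 - x)`. -/
lemma add_inv_sub_two_mul_sigma' {x ζ : ℂ} (hx : x ≠ 0) (hζ : ζ ≠ 0) (m : ℕ) :
    (x + x⁻¹ - 2) * sigma' m x ζ =
      -(x ^ (m + 1))⁻¹ * ((x - 1) * ∏ j ∈ range (2 * m + 1), (1 + -(ζ ^ m)⁻¹ * ζ ^ j * x)) := by
  induction m with
  | zero =>
    simp only [sigma', Icc_eq_empty_of_lt zero_lt_one, prod_empty, zero_add, mul_zero, pow_zero,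
      range_one, prod_singleton]
    field_simp
    ring
  | succ m ih =>
    have hshift : ∏ j ∈ range (2 * m + 1), (1 + -(ζ ^ (m + 1))⁻¹ * ζ ^ (j + 1) * x)
        = ∏ j ∈ range (2 * m + 1), (1 + -(ζ ^ m)⁻¹ * ζ ^ j * x) := by
      refine prod_congr rfl fun j _ => ?_
      field_simp
      ring
    rw [sigma', prod_Icc_succ_top (by omega), ← sigma', ← mul_assoc, ih,
      show 2 * (m + 1) + 1 = 2 * m + 1 + 1 + 1 by ring, prod_range_succ _ (2 * m + 1 + 1),
      prod_range_succ' _ (2 * m + 1), hshift]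
    field_simp
    ring

lemma add_inv_sub_two_mul_sigma'_eq_eval {x ζ : ℂ} (hx : x ≠ 0) (hζ : ζ ≠ 0) (m : ℕ) :
    (x + x⁻¹ - 2) * sigma' m x ζ =
      -(x ^ (-((m + 1 : ℕ) : ℤ)) *
        ((∏ j ∈ range (2 * m + 1), (1 + C (-(ζ ^ m)⁻¹ * ζ ^ j) * X)) * (X - C 1)).eval x) := by
  rw [add_inv_sub_two_mul_sigma' hx hζ, zpow_neg, zpow_natCast]
  simp only [eval_mul, eval_prod, eval_add, eval_one, eval_C, eval_X, eval_sub]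
  ring

namespace IsPrimitiveRoot

variable {K : Type*} [Field K] {ω : K} {p : ℕ}

lemma sum_mul_pow_zpow_eq_zero (hω : IsPrimitiveRoot ω p) (a : K) {j : ℤ} (hj : ¬ (p : ℤ) ∣ j) :
    ∑ n ∈ range p, (a * ω ^ n) ^ j = 0 := by
  have hne : ω ^ j ≠ 1 := fun h => hj ((hω.zpow_eq_one_iff_dvd j).mp h)
  have hpow : (ω ^ j) ^ p = 1 := by
    rw [← zpow_natCast, ← zpow_mul, mul_comm, zpow_mul, zpow_natCast, hω.pow_eq_one, one_zpow]
  simp_rw [mul_zpow, ← zpow_natCast ω, ← zpow_mul, mul_comm _ j, zpow_mul, zpow_natCast]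
  rw [← mul_sum, geom_sum_eq hne, hpow, sub_self, zero_div, mul_zero]

theorem sum_zpow_neg_mul_eval (hω : IsPrimitiveRoot ω p) {a : K} (ha : a ≠ 0) {P : K[X]} {r : ℕ}
    (hr : r < p) (hP : P.natDegree < r + p) :
    ∑ n ∈ range p, (a * ω ^ n) ^ (-(r : ℤ)) * P.eval (a * ω ^ n) = p * P.coeff r := by
  have hx : ∀ n, a * ω ^ n ≠ 0 := fun n => mul_ne_zero ha (pow_ne_zero _ (hω.ne_zero (by omega)))
  have hterm : ∀ n i : ℕ, (a * ω ^ n) ^ (-(r : ℤ)) * (P.coeff i * (a * ω ^ n) ^ i)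
      = P.coeff i * (a * ω ^ n) ^ ((i : ℤ) - r) := by
    intro n i
    rw [zpow_sub₀ (hx n), zpow_natCast, zpow_neg, zpow_natCast]
    ring
  simp_rw [eval_eq_sum_range' hP, mul_sum, hterm]
  rw [sum_comm, sum_eq_single r]
  · simp [mul_comm]
  · intro i hi hir
    rw [← mul_sum, hω.sum_mul_pow_zpow_eq_zero a, mul_zero]
    intro hdvd
    rw [mem_range] at hi
    have := Int.eq_zero_of_abs_lt_dvd hdvd (abs_lt.mpr ⟨by omega, by omega⟩)
    omega
  · intro h
    exact absurd (mem_range.mpr (by omega)) h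

end IsPrimitiveRoot

section epow

variable (p : ℕ)

lemma epow_add (u v : ℂ) : epow p (u + v) = epow p u * epow p v := by
  rw [epow, epow, epow, ← Complex.exp_add]
  congr 1
  ring

lemma epow_neg (w : ℂ) : epow p (-w) = (epow p w)⁻¹ := by
  rw [epow, epow, ← Complex.exp_neg]
  congr 1
  ring

lemma ep_pow (n : ℕ) : ep p ^ n = epow p n := by
  rw [ep, epow, ← Complex.exp_nat_mul]
  congr 1
  ring

lemma epow_ne_zero (w : ℂ) : epow p w ≠ 0 := Complex.exp_ne_zero _

lemma isPrimitiveRoot_ep_sq {p : ℕ} (hodd : Odd p) : IsPrimitiveRoot (ep p ^ 2) p :=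
  (Complex.isPrimitiveRoot_exp p (by rintro rfl; exact Nat.not_odd_zero hodd)).pow_of_coprime 2
    (Nat.coprime_two_left.mpr hodd)

lemma epow_add_two_mul_add_one (w : ℂ) (n : ℕ) :
    epow p (w + 2 * n + 1) = epow p (w + 1) * (ep p ^ 2) ^ n := by
  rw [← pow_mul, ep_pow, ← epow_add]
  congr 1
  push_cast
  ring

lemma ep_pow_choose_two_mul_inv_pow (m : ℕ) :
    ep p ^ m.choose 2 * ((ep p ^ m)⁻¹) ^ m = epow p (-((m : ℂ) * (m + 1)) / 2) := by
  rw [inv_pow, ← pow_mul, ep_pow, ep_pow, ← epow_neg, ← epow_add, Nat.cast_choose_two]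
  congr 1
  push_cast
  ring

end epow

theorem stmt9 (p : ℕ) (hp : 3 ≤ p) (hodd : Odd p) (lam : ℂ)
    (m : ℕ) (hm : m ≤ (p - 3) / 2) :
    ∑ n ∈ Finset.range p,
        (epow p (lam + 2 * n + 1) + epow p (-(lam + 2 * n + 1)) - 2) *
          sigma' m (epow p (lam + 2 * n + 1)) (ep p) =
      -2 * p * (-1) ^ m * qbinom (2 * m + 1) m (ep p) * epow p (-((m : ℂ) * (m + 1)) / 2) := by
  set Q := ∏ j ∈ range (2 * m + 1), (1 + C (-(ep p ^ m)⁻¹ * ep p ^ j) * X)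
  have hep : ep p ≠ 0 := Complex.exp_ne_zero _
  have hx (n : ℕ) : epow p (lam + 1) * (ep p ^ 2) ^ n ≠ 0 :=
    mul_ne_zero (epow_ne_zero p _) (pow_ne_zero _ (pow_ne_zero _ hep))
  have hdeg : (Q * (X - C 1)).natDegree < m + 1 + p :=
    (natDegree_mul_le.trans (add_le_add (natDegree_prod_one_add_C_mul_X_le _ _ _)
      (natDegree_X_sub_C_le 1))).trans_lt (by omega)
  simp only [epow_neg, epow_add_two_mul_add_one, add_inv_sub_two_mul_sigma'_eq_eval, hx, hep,
    ne_eq, not_false_eq_true]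
  rw [sum_neg_distrib, (isPrimitiveRoot_ep_sq hodd).sum_zpow_neg_mul_eval (epow_ne_zero p _)
      (by omega) hdeg, coeff_mul_X_sub_C, coeff_prod_one_add_C_mul_X, coeff_prod_one_add_C_mul_X,
    ← qbinom_symm _ (by omega : m ≤ 2 * m + 1), show 2 * m + 1 - m = m + 1 by omega,
    ← ep_pow_choose_two_mul_inv_pow, Nat.choose_succ_succ', Nat.choose_one_right]
  have hinv : (ep p ^ m)⁻¹ * ep p ^ m = 1 := inv_mul_cancel₀ (pow_ne_zero m hep)
  linear_combination (-(p : ℂ) * (-1) ^ m * ((ep p ^ m)⁻¹) ^ m * ep p ^ m.choose 2 *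
    qbinom (2 * m + 1) (m + 1) (ep p)) * hinv
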